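/- (Jacobi–Anger expansion, cosine part.) For all τ, θ ∈ ℝ, the series J₀(τ) + 2·Σ_{m=1}^{∞} J_{2m}(τ)·cos(2mθ) converges absolutely and equals cos(τ·sin θ). -/

import Mathlib

/-!
Since `τ/2 · e^{iθ} - τ/2 · e^{-iθ} = iτ sin θ`, multiplying the exponential series of the two
terms and taking real parts writes `cos (τ sin θ)` as an absolutely convergent double series
`∑_{p,q} (-1)^q (τ/2)^{p+q} / (p! q!) · cos ((p - q) θ)`. Grouping it along `n = p - q`, the
fibre of `n ≥ 0` sums to `J_n(τ) cos (nθ)` and that of `-n` to `(-1)^n J_n(τ) cos (nθ)`; pairing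
`n` with `-n` cancels the odd orders and doubles the even ones.
-/

open Real

/-- The Bessel function of the first kind of (natural) order `k`. -/
noncomputable def besselJ (k : ℕ) (τ : ℝ) : ℝ :=
  ∑' m : ℕ, (-1 : ℝ) ^ m * (τ / 2) ^ (2 * m + k) /
    ((m.factorial : ℝ) * ((m + k).factorial : ℝ))

/-- Enumerates, for each `n : ℤ`, the pairs `(p, q)` with `p - q = n`. -/
def intProdNatEquiv : ℤ × ℕ ≃ ℕ × ℕ where
  toFun w := (w.2 + w.1.toNat, w.2 + (-w.1).toNat)
  invFun z := ((z.1 : ℤ) - z.2, min z.1 z.2)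
  left_inv := by rintro ⟨n, m⟩; simp only [Prod.mk.injEq]; constructor <;> omega
  right_inv := by rintro ⟨p, q⟩; simp only [Prod.mk.injEq]; omega

noncomputable def jacobiAngerTerm (τ θ : ℝ) (z : ℕ × ℕ) : ℝ :=
  (-1) ^ z.2 * (τ / 2) ^ (z.1 + z.2) / (z.1.factorial * z.2.factorial) *
    cos ((z.1 - z.2 : ℝ) * θ)

theorem hasSum_exp_mul_exp (x y : ℂ) :
    HasSum (fun z : ℕ × ℕ => x ^ z.1 / z.1.factorial * (y ^ z.2 / z.2.factorial))
      (Complex.exp x * Complex.exp y) := by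
  have hnorm (w : ℂ) : Summable fun n : ℕ => ‖w ^ n / n.factorial‖ := by
    simpa only [norm_div, norm_pow, Complex.norm_natCast] using
      Real.summable_pow_div_factorial ‖w‖
  have hexp (w : ℂ) : ∑' n : ℕ, w ^ n / n.factorial = Complex.exp w := by
    rw [Complex.exp_eq_exp_ℂ, (NormedSpace.expSeries_div_hasSum_exp w).tsum_eq]
  rw [← hexp x, ← hexp y, tsum_mul_tsum_of_summable_norm (hnorm x) (hnorm y)]
  exact (summable_mul_of_summable_norm (hnorm x) (hnorm y)).hasSum

theorem jacobiAngerTerm_eq_re (τ θ : ℝ) (p q : ℕ) :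
    jacobiAngerTerm τ θ (p, q) =
      ((τ / 2 * Complex.exp (θ * Complex.I)) ^ p / p.factorial *
        ((-(τ / 2) * Complex.exp (-(θ * Complex.I))) ^ q / q.factorial)).re := by
  have hexp : Complex.exp (θ * Complex.I) ^ p * Complex.exp (-(θ * Complex.I)) ^ q =
      Complex.exp (((p - q : ℝ) * θ : ℝ) * Complex.I) := by
    rw [← Complex.exp_nat_mul, ← Complex.exp_nat_mul, ← Complex.exp_add]
    push_cast; ring_nf
  calc jacobiAngerTerm τ θ (p, q)
      = (((-1) ^ q * (τ / 2) ^ (p + q) / (p.factorial * q.factorial) : ℝ) *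
          Complex.exp (((p - q : ℝ) * θ : ℝ) * Complex.I)).re := by
        rw [Complex.re_ofReal_mul, Complex.exp_ofReal_mul_I_re]; rfl
    _ = _ := by
        rw [← hexp, mul_pow, mul_pow, neg_pow (τ / 2 : ℂ)]; congr 1; push_cast; ring

theorem hasSum_jacobiAngerTerm (τ θ : ℝ) : HasSum (jacobiAngerTerm τ θ) (cos (τ * sin θ)) := by
  have hsin : τ / 2 * Complex.exp (θ * Complex.I) + -(τ / 2) * Complex.exp (-(θ * Complex.I)) =
      (τ * sin θ : ℝ) * Complex.I := by
    rw [← neg_mul, Complex.exp_mul_I, Complex.exp_mul_I, Complex.cos_neg, Complex.sin_neg]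
    push_cast; ring
  have h := Complex.hasSum_re (hasSum_exp_mul_exp (τ / 2 * Complex.exp (θ * Complex.I))
    (-(τ / 2) * Complex.exp (-(θ * Complex.I))))
  rw [← Complex.exp_add, hsin, Complex.exp_ofReal_mul_I_re] at h
  exact h.congr_fun fun z => jacobiAngerTerm_eq_re τ θ z.1 z.2

theorem tsum_jacobiAngerTerm_natCast (τ θ : ℝ) (k : ℕ) :
    ∑' m : ℕ, jacobiAngerTerm τ θ (intProdNatEquiv (k, m)) = besselJ k τ * cos (k * θ) := by
  rw [besselJ, ← tsum_mul_right]
  refine tsum_congr fun m => ?_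
  have hk : (m + k : ℕ) - (m : ℝ) = k := by push_cast; ring
  simp only [intProdNatEquiv, Equiv.coe_fn_mk, Int.toNat_natCast, Int.toNat_neg_natCast,
    add_zero, jacobiAngerTerm, hk]
  ring

theorem tsum_jacobiAngerTerm_neg_natCast (τ θ : ℝ) (k : ℕ) :
    ∑' m : ℕ, jacobiAngerTerm τ θ (intProdNatEquiv (-k, m)) =
      (-1) ^ k * (besselJ k τ * cos (k * θ)) := by
  rw [besselJ, ← tsum_mul_right, ← tsum_mul_left]
  refine tsum_congr fun m => ?_
  have hk : (m : ℝ) - (m + k : ℕ) = -k := by push_cast; ring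
  simp only [intProdNatEquiv, Equiv.coe_fn_mk, Int.toNat_natCast, Int.toNat_neg_natCast, neg_neg,
    add_zero, jacobiAngerTerm, hk, neg_mul, cos_neg]
  ring

theorem hasSum_one_add_neg_one_pow_mul_besselJ_mul_cos (τ θ : ℝ) :
    HasSum (fun k : ℕ => (1 + (-1) ^ k) * (besselJ k τ * cos (k * θ)))
      (cos (τ * sin θ) + besselJ 0 τ) := by
  have hprod := intProdNatEquiv.hasSum_iff.mpr (hasSum_jacobiAngerTerm τ θ)
  have hfib := hprod.prod_fiberwise fun n => (hprod.summable.prod_factor n).hasSum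
  convert hfib.nat_add_neg using 1
  · ext k
    simp only [Function.comp_apply, tsum_jacobiAngerTerm_natCast, tsum_jacobiAngerTerm_neg_natCast]
    ring
  · simpa using (tsum_jacobiAngerTerm_natCast τ θ 0).symm

theorem hasSum_two_mul_besselJ_mul_cos (τ θ : ℝ) :
    HasSum (fun m : ℕ => 2 * besselJ (2 * m) τ * cos ((2 * m : ℕ) * θ))
      (cos (τ * sin θ) + besselJ 0 τ) := by
  have hodd : ∀ k ∉ Set.range (2 * ·), (1 + (-1) ^ k) * (besselJ k τ * cos (k * θ)) = 0 := by
    intro k hk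
    obtain ⟨m, rfl⟩ : Odd k := Nat.not_even_iff_odd.mp fun ⟨m, hm⟩ => hk ⟨m, by dsimp only; omega⟩
    simp [pow_succ, pow_mul]
  convert (Function.Injective.hasSum_iff (mul_right_injective₀ two_ne_zero) hodd).mpr
    (hasSum_one_add_neg_one_pow_mul_besselJ_mul_cos τ θ) using 2 with m
  simp only [Nat.cast_mul, Nat.cast_ofNat, Function.comp_apply, pow_mul, even_two, Even.neg_pow,
    one_pow]
  ring

theorem jacobi_anger_cos (τ θ : ℝ) :
    Summable (fun m : ℕ => |2 * besselJ (2 * (m + 1)) τ * Real.cos ((2 * (m + 1) : ℕ) * θ)|) ∧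
    besselJ 0 τ + ∑' m : ℕ, 2 * besselJ (2 * (m + 1)) τ * Real.cos ((2 * (m + 1) : ℕ) * θ) =
      Real.cos (τ * Real.sin θ) := by
  have h := (hasSum_nat_add_iff' 1).mpr (hasSum_two_mul_besselJ_mul_cos τ θ)
  simp only [Finset.sum_range_one, Nat.cast_zero, mul_zero, zero_mul, cos_zero] at h
  refine ⟨summable_abs_iff.mpr h.summable, ?_⟩
  rw [h.tsum_eq]
  ring
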